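/- arXiv:math/0406472 — 4 statements merged into one kernel-verified Lean document; each statement's English description precedes it below -/
import Mathlib

section
/- In model (1), X₁ is uncorrelated with the residual of any linear model formed from the explanatory variables X₂, …, X₁₀: for all real numbers b₀, b₂, b₃, …, b₁₀, one has Cov(X₁, Y - b₀ - ∑_{j=2}^{10} bⱼ Xⱼ) = 0. -/
open MeasureTheory ProbabilityTheory
open Fin.NatCast

/-- Covariance of two real random variables: `Cov(U,V) = E[UV] - E[U]E[V]`. -/
noncomputable def cov {Ω : Type*} [MeasurableSpace Ω] (μ : Measure Ω) (U V : Ω → ℝ) : ℝ :=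
  (∫ ω, U ω * V ω ∂μ) - (∫ ω, U ω ∂μ) * (∫ ω, V ω ∂μ)

/-- In model (1), `X₁` is uncorrelated with the residual of any linear model formed from
`X₂, …, X₁₀`: for all reals `b₀, b₂, …, b₁₀`,
`Cov(X₁, Y - b₀ - ∑_{j=2}^{10} bⱼ Xⱼ) = 0`.
Here `X 0` plays the role of the noise `ε`, and `X i` for `i = 1, …, 10`
are the explanatory variables `X₁, …, X₁₀`. -/
theorem cov_X1_residual_eq_zero {Ω : Type*} [MeasurableSpace Ω]
    (P : Measure Ω) [IsProbabilityMeasure P]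
    (X : Fin 11 → Ω → ℝ) (hmeas : ∀ i, Measurable (X i))
    (hIndep : iIndepFun X P)
    (hUnif : ∀ i : Fin 11, i ≠ 0 →
      Measure.map (X i) P = volume.restrict (Set.Icc (0 : ℝ) 1))
    (hε2 : MemLp (X 0) 2 P) (hεmean : ∫ ω, X 0 ω ∂P = 0)
    (Y : Ω → ℝ)
    (hY : ∀ ω, Y ω = (X 1 ω - 1 / 2) ^ 2 + X 2 ω + X 3 ω + X 4 ω + X 5 ω + X 0 ω) :
    ∀ b : ℕ → ℝ,
      cov P (X 1)
        (fun ω => Y ω - b 0 - ∑ j ∈ Finset.Icc 2 10, b j * X (j : Fin 11) ω) = 0 := by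
  intro b
  have hXa : ∀ i : Fin 11, AEStronglyMeasurable (X i) P :=
    fun i => (hmeas i).aestronglyMeasurable
  -- a.e. boundedness of the uniform variables
  have hbd : ∀ i : Fin 11, i ≠ 0 → ∀ᵐ ω ∂P, X i ω ∈ Set.Icc (0:ℝ) 1 := by
    intro i hi
    have h0 : Measure.map (X i) P (Set.Icc (0:ℝ) 1)ᶜ = 0 := by
      rw [hUnif i hi, Measure.restrict_apply measurableSet_Icc.compl]
      simp
    rw [Measure.map_apply (hmeas i) measurableSet_Icc.compl] at h0
    have hset : {a | ¬ X i a ∈ Set.Icc (0:ℝ) 1} = X i ⁻¹' (Set.Icc (0:ℝ) 1)ᶜ := rfl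
    rw [ae_iff, hset]
    exact h0
  have hbd1 := hbd 1 (by decide)
  -- integrability facts
  have hint : ∀ i : Fin 11, i ≠ 0 → Integrable (X i) P := by
    intro i hi
    refine memLp_one_iff_integrable.1 (MemLp.of_bound (hXa i) 1 ?_)
    filter_upwards [hbd i hi] with ω hω
    rw [Real.norm_eq_abs]
    exact abs_le.2 ⟨by linarith [hω.1], hω.2⟩
  have hε1 : Integrable (X 0) P := hε2.integrable (by norm_num)
  have hintmul : ∀ i : Fin 11, i ≠ 0 → Integrable (fun ω => X 1 ω * X i ω) P := by
    intro i hi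
    refine memLp_one_iff_integrable.1 (MemLp.of_bound ((hXa 1).mul (hXa i)) 1 ?_)
    filter_upwards [hbd1, hbd i hi] with ω h1 h2
    rw [Real.norm_eq_abs, abs_mul]
    have a1 : |X 1 ω| ≤ 1 := abs_le.2 ⟨by linarith [h1.1], h1.2⟩
    have a2 : |X i ω| ≤ 1 := abs_le.2 ⟨by linarith [h2.1], h2.2⟩
    nlinarith [abs_nonneg (X 1 ω), abs_nonneg (X i ω)]
  have hintf2 : Integrable (fun ω => (X 1 ω - 1/2)^2) P := by
    refine memLp_one_iff_integrable.1
      (MemLp.of_bound (((hXa 1).sub aestronglyMeasurable_const).pow 2) 1 ?_)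
    filter_upwards [hbd1] with ω h1
    rw [Real.norm_eq_abs]
    have := h1.1; have := h1.2
    rw [abs_le]; constructor <;> nlinarith
  have hintf3 : Integrable (fun ω => X 1 ω * (X 1 ω - 1/2)^2) P := by
    refine memLp_one_iff_integrable.1
      (MemLp.of_bound ((hXa 1).mul (((hXa 1).sub aestronglyMeasurable_const).pow 2)) 1 ?_)
    filter_upwards [hbd1] with ω h1
    rw [Real.norm_eq_abs]
    have := h1.1; have := h1.2
    rw [abs_le]; constructor <;> nlinarith
  have hint10 : Integrable (fun ω => X 1 ω * X 0 ω) P := by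
    refine hε1.bdd_mul (c := 1) (hXa 1) ?_
    filter_upwards [hbd1] with ω h1
    rw [Real.norm_eq_abs]
    exact abs_le.2 ⟨by linarith [h1.1], h1.2⟩
  -- moments of the uniform variables
  have hmom : ∀ (g : ℝ → ℝ), Measurable g → ∀ i : Fin 11, i ≠ 0 →
      ∫ ω, g (X i ω) ∂P = ∫ x in (0:ℝ)..1, g x := by
    intro g hg i hi
    rw [← integral_map (hmeas i).aemeasurable hg.aestronglyMeasurable, hUnif i hi,
      intervalIntegral.integral_of_le zero_le_one, ← MeasureTheory.integral_Icc_eq_integral_Ioc]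
  have mj : ∀ i : Fin 11, i ≠ 0 → ∫ ω, X i ω ∂P = 1/2 := by
    intro i hi
    have h := hmom (fun x => x) measurable_id i hi
    rw [h, integral_id]; norm_num
  have m1 : ∫ ω, X 1 ω ∂P = 1/2 := mj 1 (by decide)
  have m2 : ∫ ω, (X 1 ω - 1/2)^2 ∂P = 1/12 := by
    have h := hmom (fun x => (x - 1/2)^2) (by fun_prop) 1 (by decide)
    rw [h, intervalIntegral.integral_comp_sub_right (fun x => x^2) (1/2), integral_pow]
    norm_num
  have m3 : ∫ ω, X 1 ω * (X 1 ω - 1/2)^2 ∂P = 1/24 := by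
    have h := hmom (fun x => x * (x - 1/2)^2) (by fun_prop) 1 (by decide)
    rw [h]
    have hrw : ∀ x : ℝ, x * (x - 1/2)^2 = x^3 - x^2 + x * (1/4) := fun x => by ring
    simp_rw [hrw]
    rw [intervalIntegral.integral_add (f := fun x : ℝ => x^3 - x^2) (g := fun x : ℝ => x * (1/4))
        (((continuous_pow 3).sub (continuous_pow 2)).intervalIntegrable _ _)
        ((by continuity : Continuous fun x : ℝ => x * (1/4)).intervalIntegrable _ _),
      intervalIntegral.integral_sub ((continuous_pow 3).intervalIntegrable _ _)
        ((continuous_pow 2).intervalIntegrable _ _),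
      intervalIntegral.integral_mul_const, integral_pow, integral_pow, integral_id]
    norm_num
  -- product moments via independence
  have pj : ∀ i : Fin 11, i ≠ 0 → i ≠ 1 → ∫ ω, X 1 ω * X i ω ∂P = 1/4 := by
    intro i h0 h1
    have hind : IndepFun (X 1) (X i) P := hIndep.indepFun (Ne.symm h1)
    rw [hind.integral_fun_mul_eq_mul_integral (hXa 1) (hXa i), m1, mj i h0]; norm_num
  have p0 : ∫ ω, X 1 ω * X 0 ω ∂P = 0 := by
    have hind : IndepFun (X 1) (X 0) P := hIndep.indepFun (by decide)
    rw [hind.integral_fun_mul_eq_mul_integral (hXa 1) (hXa 0), hεmean, mul_zero]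
  -- facts about the coercion ℕ → Fin 11 on the index set
  have hcoe : ∀ j ∈ Finset.Icc (2:ℕ) 10, ((j : Fin 11) ≠ 0 ∧ (j : Fin 11) ≠ 1) := by
    intro j hj
    simp only [Finset.mem_Icc] at hj
    have hv : ((j : Fin 11) : ℕ) = j := by
      rw [Fin.val_natCast]; omega
    constructor <;> intro h <;> rw [h] at hv <;> simp at hv <;> omega
  -- the linear-combination terms
  have hSint : Integrable (fun ω => ∑ j ∈ Finset.Icc 2 10, b j * X (j : Fin 11) ω) P :=
    integrable_finset_sum _ fun j hj => (hint _ (hcoe j hj).1).const_mul (b j)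
  have hES : ∫ ω, ∑ j ∈ Finset.Icc 2 10, b j * X (j : Fin 11) ω ∂P
      = (∑ j ∈ Finset.Icc 2 10, b j) * (1/2) := by
    rw [integral_finset_sum _ fun j hj => (hint _ (hcoe j hj).1).const_mul (b j),
      Finset.sum_mul]
    exact Finset.sum_congr rfl fun j hj => by
      rw [integral_const_mul, mj _ (hcoe j hj).1]
  have hS2int : Integrable (fun ω => ∑ j ∈ Finset.Icc 2 10, b j * (X 1 ω * X (j : Fin 11) ω)) P :=
    integrable_finset_sum _ fun j hj => (hintmul _ (hcoe j hj).1).const_mul (b j)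
  have hES2 : ∫ ω, ∑ j ∈ Finset.Icc 2 10, b j * (X 1 ω * X (j : Fin 11) ω) ∂P
      = (∑ j ∈ Finset.Icc 2 10, b j) * (1/4) := by
    rw [integral_finset_sum _ fun j hj => (hintmul _ (hcoe j hj).1).const_mul (b j),
      Finset.sum_mul]
    exact Finset.sum_congr rfl fun j hj => by
      rw [integral_const_mul, pj _ (hcoe j hj).1 (hcoe j hj).2]
  -- integrability chains
  have d2 : (2 : Fin 11) ≠ 0 := by decide
  have d3 : (3 : Fin 11) ≠ 0 := by decide
  have d4 : (4 : Fin 11) ≠ 0 := by decide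
  have d5 : (5 : Fin 11) ≠ 0 := by decide
  have iA : Integrable (fun ω => (X 1 ω - 1/2)^2 + X 2 ω) P := hintf2.add (hint 2 d2)
  have iB : Integrable (fun ω => (X 1 ω - 1/2)^2 + X 2 ω + X 3 ω) P := iA.add (hint 3 d3)
  have iC : Integrable (fun ω => (X 1 ω - 1/2)^2 + X 2 ω + X 3 ω + X 4 ω) P := iB.add (hint 4 d4)
  have iD : Integrable (fun ω => (X 1 ω - 1/2)^2 + X 2 ω + X 3 ω + X 4 ω + X 5 ω) P :=
    iC.add (hint 5 d5)
  have hintF : Integrable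
      (fun ω => (X 1 ω - 1/2)^2 + X 2 ω + X 3 ω + X 4 ω + X 5 ω + X 0 ω) P := iD.add hε1
  -- expectation of the residual
  have hEY : ∫ ω, (Y ω - b 0 - ∑ j ∈ Finset.Icc 2 10, b j * X (j : Fin 11) ω) ∂P
      = (1/12 + 1/2 + 1/2 + 1/2 + 1/2 + 0) - b 0
        - (∑ j ∈ Finset.Icc 2 10, b j) * (1/2) := by
    simp only [hY]
    have k1 : Integrable (fun ω =>
        (X 1 ω - 1/2)^2 + X 2 ω + X 3 ω + X 4 ω + X 5 ω + X 0 ω - b 0) P :=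
      hintF.sub (integrable_const _)
    rw [integral_sub k1 hSint,
      integral_sub hintF (integrable_const _),
      integral_add iD hε1, integral_add iC (hint 5 d5), integral_add iB (hint 4 d4),
      integral_add iA (hint 3 d3), integral_add hintf2 (hint 2 d2),
      m2, mj 2 d2, mj 3 d3, mj 4 d4, mj 5 d5, hεmean, hES, integral_const]
    simp
  -- pointwise expansion of X1 * residual
  have key : ∀ ω, X 1 ω * (Y ω - b 0 - ∑ j ∈ Finset.Icc 2 10, b j * X (j : Fin 11) ω)
      = X 1 ω * (X 1 ω - 1/2)^2 + X 1 ω * X 2 ω + X 1 ω * X 3 ω + X 1 ω * X 4 ω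
        + X 1 ω * X 5 ω + X 1 ω * X 0 ω - b 0 * X 1 ω
        - ∑ j ∈ Finset.Icc 2 10, b j * (X 1 ω * X (j : Fin 11) ω) := by
    intro ω
    have hs : X 1 ω * ∑ j ∈ Finset.Icc 2 10, b j * X (j : Fin 11) ω
        = ∑ j ∈ Finset.Icc 2 10, b j * (X 1 ω * X (j : Fin 11) ω) := by
      rw [Finset.mul_sum]; exact Finset.sum_congr rfl fun j _ => by ring
    rw [hY ω,
      show ∀ E S : ℝ, X 1 ω * (E - b 0 - S) = X 1 ω * E - b 0 * X 1 ω - X 1 ω * S from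
        fun E S => by ring, hs]
    ring
  have jA : Integrable (fun ω => X 1 ω * (X 1 ω - 1/2)^2 + X 1 ω * X 2 ω) P :=
    hintf3.add (hintmul 2 d2)
  have jB : Integrable (fun ω => X 1 ω * (X 1 ω - 1/2)^2 + X 1 ω * X 2 ω + X 1 ω * X 3 ω) P :=
    jA.add (hintmul 3 d3)
  have jC : Integrable (fun ω => X 1 ω * (X 1 ω - 1/2)^2 + X 1 ω * X 2 ω + X 1 ω * X 3 ω
      + X 1 ω * X 4 ω) P := jB.add (hintmul 4 d4)
  have jD : Integrable (fun ω => X 1 ω * (X 1 ω - 1/2)^2 + X 1 ω * X 2 ω + X 1 ω * X 3 ω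
      + X 1 ω * X 4 ω + X 1 ω * X 5 ω) P := jC.add (hintmul 5 d5)
  have jE : Integrable (fun ω => X 1 ω * (X 1 ω - 1/2)^2 + X 1 ω * X 2 ω + X 1 ω * X 3 ω
      + X 1 ω * X 4 ω + X 1 ω * X 5 ω + X 1 ω * X 0 ω) P := jD.add hint10
  -- expectation of X1 * residual
  have hEXR : ∫ ω, X 1 ω * (Y ω - b 0 - ∑ j ∈ Finset.Icc 2 10, b j * X (j : Fin 11) ω) ∂P
      = (1/24 + 1/4 + 1/4 + 1/4 + 1/4 + 0) - b 0 * (1/2)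
        - (∑ j ∈ Finset.Icc 2 10, b j) * (1/4) := by
    simp only [key]
    have hb0X : Integrable (fun ω => b 0 * X 1 ω) P := (hint 1 (by decide)).const_mul (b 0)
    have k2 : Integrable (fun ω => X 1 ω * (X 1 ω - 1/2)^2 + X 1 ω * X 2 ω + X 1 ω * X 3 ω
        + X 1 ω * X 4 ω + X 1 ω * X 5 ω + X 1 ω * X 0 ω - b 0 * X 1 ω) P := jE.sub hb0X
    rw [integral_sub k2 hS2int, integral_sub jE hb0X,
      integral_add jD hint10, integral_add jC (hintmul 5 d5), integral_add jB (hintmul 4 d4),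
      integral_add jA (hintmul 3 d3), integral_add hintf3 (hintmul 2 d2),
      m3, pj 2 d2 (by decide), pj 3 d3 (by decide), pj 4 d4 (by decide), pj 5 d5 (by decide),
      p0, integral_const_mul, m1, hES2]
  -- final computation
  show (∫ ω, X 1 ω * (Y ω - b 0 - ∑ j ∈ Finset.Icc 2 10, b j * X (j : Fin 11) ω) ∂P)
      - (∫ ω, X 1 ω ∂P) *
        (∫ ω, (Y ω - b 0 - ∑ j ∈ Finset.Icc 2 10, b j * X (j : Fin 11) ω) ∂P) = 0
  rw [hEXR, hEY, m1]
  ring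
end

section
/- In model (1), for all distinct indices i, j ∈ {2, 3, 4, 5} and every index k ∈ {2, 3, 4, 5}, the standardized covariance of the interaction term XᵢXⱼ with Y exceeds that of the main term X_k with Y by the factor √(12/7): Cov(XᵢXⱼ, Y)/√(Var(XᵢXⱼ)) = √(12/7) · Cov(X_k, Y)/√(Var(X_k)). -/
open MeasureTheory ProbabilityTheory

open Fin.NatCast

/-- Variance of a real random variable: `Var(W) = E[W²] - (E[W])²`. -/
noncomputable def var {Ω : Type*} [MeasurableSpace Ω] (μ : Measure Ω) (W : Ω → ℝ) : ℝ :=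
  (∫ ω, W ω ^ 2 ∂μ) - (∫ ω, W ω ∂μ) ^ 2

/-- In model (1), for distinct `i, j ∈ {2,3,4,5}` and `k ∈ {2,3,4,5}`, the standardized
covariance of `XᵢXⱼ` with `Y` exceeds that of `X_k` with `Y` by the factor `√(12/7)`:
`Cov(XᵢXⱼ, Y)/√Var(XᵢXⱼ) = √(12/7) · Cov(X_k, Y)/√Var(X_k)`.
Here `X 0` plays the role of the noise `ε`, and `X i` for `i = 1, …, 10`
are the explanatory variables `X₁, …, X₁₀`. -/
theorem standardized_cov_interaction_vs_main {Ω : Type*} [MeasurableSpace Ω]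
    (P : Measure Ω) [IsProbabilityMeasure P]
    (X : Fin 11 → Ω → ℝ) (hmeas : ∀ i, Measurable (X i))
    (hIndep : iIndepFun X P)
    (hUnif : ∀ i : Fin 11, i ≠ 0 →
      Measure.map (X i) P = volume.restrict (Set.Icc (0 : ℝ) 1))
    (hε2 : MemLp (X 0) 2 P) (hεmean : ∫ ω, X 0 ω ∂P = 0)
    (Y : Ω → ℝ)
    (hY : ∀ ω, Y ω = (X 1 ω - 1 / 2) ^ 2 + X 2 ω + X 3 ω + X 4 ω + X 5 ω + X 0 ω) :
    ∀ i j k : ℕ, i ∈ ({2, 3, 4, 5} : Finset ℕ) → j ∈ ({2, 3, 4, 5} : Finset ℕ) →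
      k ∈ ({2, 3, 4, 5} : Finset ℕ) → i ≠ j →
      cov P (fun ω => X (i : Fin 11) ω * X (j : Fin 11) ω) Y /
          Real.sqrt (var P (fun ω => X (i : Fin 11) ω * X (j : Fin 11) ω)) =
        Real.sqrt (12 / 7) *
          (cov P (X (k : Fin 11)) Y / Real.sqrt (var P (X (k : Fin 11)))) := by
  -- moments of uniform variables
  have hmom : ∀ (m : Fin 11), m ≠ 0 → ∀ (f : ℝ → ℝ), Measurable f →
      ∫ ω, f (X m ω) ∂P = ∫ x in Set.Icc (0:ℝ) 1, f x := by
    intro m hm f hf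
    rw [← integral_map (hmeas m).aemeasurable hf.aestronglyMeasurable, hUnif m hm]
  have hm1 : ∀ m : Fin 11, m ≠ 0 → ∫ ω, X m ω ∂P = 1/2 := by
    intro m hm
    have h := hmom m hm id measurable_id
    simp only [id] at h
    rw [h, MeasureTheory.integral_Icc_eq_integral_Ioc,
      ← intervalIntegral.integral_of_le (zero_le_one), integral_id]
    norm_num
  have hm2 : ∀ m : Fin 11, m ≠ 0 → ∫ ω, X m ω ^ 2 ∂P = 1/3 := by
    intro m hm
    have h := hmom m hm (fun x => x ^ 2) (measurable_id.pow_const 2)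
    rw [h, MeasureTheory.integral_Icc_eq_integral_Ioc,
      ← intervalIntegral.integral_of_le (zero_le_one), integral_pow]
    norm_num
  -- a.e. bounds
  have hae : ∀ m : Fin 11, m ≠ 0 → ∀ᵐ ω ∂P, X m ω ∈ Set.Icc (0:ℝ) 1 := by
    intro m hm
    have h : ∀ᵐ x ∂(Measure.map (X m) P), x ∈ Set.Icc (0:ℝ) 1 := by
      rw [hUnif m hm]
      exact ae_restrict_mem measurableSet_Icc
    exact (MeasureTheory.ae_map_iff (hmeas m).aemeasurable measurableSet_Icc).mp h
  have hnorm : ∀ m : Fin 11, m ≠ 0 → ∀ᵐ ω ∂P, ‖X m ω‖ ≤ 1 := by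
    intro m hm
    filter_upwards [hae m hm] with ω hω
    rw [Real.norm_eq_abs, abs_le]
    exact ⟨by linarith [hω.1], hω.2⟩
  have intb : ∀ (f : Ω → ℝ), Measurable f → (∀ᵐ ω ∂P, ‖f ω‖ ≤ 1) → Integrable f P :=
    fun f hf hb => ⟨hf.aestronglyMeasurable, MeasureTheory.HasFiniteIntegral.of_bounded hb⟩
  -- the quadratic term
  have hGmeas : Measurable (fun ω => (X 1 ω - 1/2)^2) :=
    ((hmeas 1).sub measurable_const).pow_const 2
  have hGnorm : ∀ᵐ ω ∂P, ‖(X 1 ω - 1/2)^2‖ ≤ 1 := by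
    filter_upwards [hae 1 (by decide)] with ω hω
    rw [Real.norm_eq_abs, abs_le]
    constructor <;> nlinarith [hω.1, hω.2]
  have hεint : Integrable (X 0) P := hε2.integrable one_le_two
  -- splitting of the covariance with Y
  have covsplit : ∀ Z : Ω → ℝ, Measurable Z → (∀ᵐ ω ∂P, ‖Z ω‖ ≤ 1) →
      cov P Z Y =
        ((∫ ω, Z ω * (X 1 ω - 1/2)^2 ∂P) - (∫ ω, Z ω ∂P) * (∫ ω, (X 1 ω - 1/2)^2 ∂P))
        + ((∫ ω, Z ω * X 2 ω ∂P) - (∫ ω, Z ω ∂P) * (∫ ω, X 2 ω ∂P))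
        + ((∫ ω, Z ω * X 3 ω ∂P) - (∫ ω, Z ω ∂P) * (∫ ω, X 3 ω ∂P))
        + ((∫ ω, Z ω * X 4 ω ∂P) - (∫ ω, Z ω ∂P) * (∫ ω, X 4 ω ∂P))
        + ((∫ ω, Z ω * X 5 ω ∂P) - (∫ ω, Z ω ∂P) * (∫ ω, X 5 ω ∂P))
        + ((∫ ω, Z ω * X 0 ω ∂P) - (∫ ω, Z ω ∂P) * (∫ ω, X 0 ω ∂P)) := by
    intro Z hZ hZb
    have mulb : ∀ (g : Ω → ℝ), (∀ᵐ ω ∂P, ‖g ω‖ ≤ 1) → ∀ᵐ ω ∂P, ‖Z ω * g ω‖ ≤ 1 := by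
      intro g hg
      filter_upwards [hZb, hg] with ω h1 h2
      rw [norm_mul]
      calc ‖Z ω‖ * ‖g ω‖ ≤ 1 * 1 := by
            exact mul_le_mul h1 h2 (norm_nonneg _) zero_le_one
        _ = 1 := by norm_num
    have iG : Integrable (fun ω => (X 1 ω - 1/2)^2) P := intb _ hGmeas hGnorm
    have iX : ∀ m : Fin 11, m ≠ 0 → Integrable (X m) P :=
      fun m hm => intb _ (hmeas m) (hnorm m hm)
    have iZG : Integrable (fun ω => Z ω * (X 1 ω - 1/2)^2) P :=
      intb _ (hZ.mul hGmeas) (mulb _ hGnorm)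
    have iZX : ∀ m : Fin 11, m ≠ 0 → Integrable (fun ω => Z ω * X m ω) P :=
      fun m hm => intb _ (hZ.mul (hmeas m)) (mulb _ (hnorm m hm))
    have iZε : Integrable (fun ω => Z ω * X 0 ω) P :=
      hεint.bdd_mul hZ.aestronglyMeasurable hZb
    have h1 : ∫ ω, Z ω * Y ω ∂P =
        ∫ ω, (Z ω * (X 1 ω - 1/2)^2 + Z ω * X 2 ω + Z ω * X 3 ω + Z ω * X 4 ω
          + Z ω * X 5 ω + Z ω * X 0 ω) ∂P := by
      refine integral_congr_ae (Filter.Eventually.of_forall fun ω => ?_)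
      simp only [hY]; ring
    have h2 : ∫ ω, Y ω ∂P =
        ∫ ω, ((X 1 ω - 1/2)^2 + X 2 ω + X 3 ω + X 4 ω + X 5 ω + X 0 ω) ∂P := by
      refine integral_congr_ae (Filter.Eventually.of_forall fun ω => ?_)
      simp only [hY]
    have jZ2 : Integrable (fun ω => Z ω * (X 1 ω - 1/2)^2 + Z ω * X 2 ω) P :=
      iZG.add (iZX 2 (by decide))
    have jZ3 : Integrable (fun ω => Z ω * (X 1 ω - 1/2)^2 + Z ω * X 2 ω + Z ω * X 3 ω) P :=
      jZ2.add (iZX 3 (by decide))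
    have jZ4 : Integrable (fun ω => Z ω * (X 1 ω - 1/2)^2 + Z ω * X 2 ω + Z ω * X 3 ω
        + Z ω * X 4 ω) P := jZ3.add (iZX 4 (by decide))
    have jZ5 : Integrable (fun ω => Z ω * (X 1 ω - 1/2)^2 + Z ω * X 2 ω + Z ω * X 3 ω
        + Z ω * X 4 ω + Z ω * X 5 ω) P := jZ4.add (iZX 5 (by decide))
    have j2 : Integrable (fun ω => (X 1 ω - 1/2)^2 + X 2 ω) P := iG.add (iX 2 (by decide))
    have j3 : Integrable (fun ω => (X 1 ω - 1/2)^2 + X 2 ω + X 3 ω) P :=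
      j2.add (iX 3 (by decide))
    have j4 : Integrable (fun ω => (X 1 ω - 1/2)^2 + X 2 ω + X 3 ω + X 4 ω) P :=
      j3.add (iX 4 (by decide))
    have j5 : Integrable (fun ω => (X 1 ω - 1/2)^2 + X 2 ω + X 3 ω + X 4 ω + X 5 ω) P :=
      j4.add (iX 5 (by decide))
    unfold cov
    rw [h1, h2]
    rw [integral_add jZ5 iZε, integral_add jZ4 (iZX 5 (by decide)),
        integral_add jZ3 (iZX 4 (by decide)), integral_add jZ2 (iZX 3 (by decide)),
        integral_add iZG (iZX 2 (by decide))]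
    rw [integral_add j5 hεint, integral_add j4 (iX 5 (by decide)),
        integral_add j3 (iX 4 (by decide)), integral_add j2 (iX 3 (by decide)),
        integral_add iG (iX 2 (by decide))]
    ring
  -- covariance of independent variables vanishes
  have covzero : ∀ (Zf W : Ω → ℝ), IndepFun Zf W P → Measurable Zf → Measurable W →
      (∫ ω, Zf ω * W ω ∂P) - (∫ ω, Zf ω ∂P) * (∫ ω, W ω ∂P) = 0 := by
    intro Zf W h hZf hW
    have h2 : ∫ ω, Zf ω * W ω ∂P = (∫ ω, Zf ω ∂P) * ∫ ω, W ω ∂P :=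
      h.integral_fun_mul_eq_mul_integral hZf.aestronglyMeasurable hW.aestronglyMeasurable
    rw [h2]; ring
  -- independence facts
  have ind2 : ∀ a b : Fin 11, a ≠ b → IndepFun (X a) (X b) P :=
    fun a b h => hIndep.indepFun h
  have indMul : ∀ a b c : Fin 11, a ≠ c → b ≠ c →
      IndepFun (fun ω => X a ω * X b ω) (X c) P :=
    fun a b c h1 h2 => hIndep.indepFun_mul_left hmeas a b c h1 h2
  have indG : ∀ (Zf : Ω → ℝ), IndepFun Zf (X 1) P →
      IndepFun Zf (fun ω => (X 1 ω - 1/2)^2) P := by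
    intro Zf h
    exact h.comp measurable_id ((measurable_id.sub measurable_const).pow_const 2)
  have indSq : ∀ a b : Fin 11, a ≠ b → IndepFun (fun ω => X a ω ^ 2) (X b) P :=
    fun a b h => (ind2 a b h).comp (measurable_id.pow_const 2) measurable_id
  have indSqSq : ∀ a b : Fin 11, a ≠ b →
      IndepFun (fun ω => X a ω ^ 2) (fun ω => X b ω ^ 2) P :=
    fun a b h => (ind2 a b h).comp (measurable_id.pow_const 2) (measurable_id.pow_const 2)
  -- product moments
  have hprod : ∀ a b : Fin 11, a ≠ 0 → b ≠ 0 → a ≠ b →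
      ∫ ω, X a ω * X b ω ∂P = 1/4 := by
    intro a b ha hb hab
    have h2 : ∫ ω, X a ω * X b ω ∂P = (∫ ω, X a ω ∂P) * ∫ ω, X b ω ∂P :=
      (ind2 a b hab).integral_fun_mul_eq_mul_integral (hmeas a).aestronglyMeasurable (hmeas b).aestronglyMeasurable
    rw [h2, hm1 a ha, hm1 b hb]; norm_num
  have hsqprod : ∀ a b : Fin 11, a ≠ 0 → b ≠ 0 → a ≠ b →
      ∫ ω, X a ω ^ 2 * X b ω ∂P = 1/6 := by
    intro a b ha hb hab
    have h2 : ∫ ω, X a ω ^ 2 * X b ω ∂P = (∫ ω, X a ω ^ 2 ∂P) * ∫ ω, X b ω ∂P :=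
      (indSq a b hab).integral_fun_mul_eq_mul_integral ((hmeas a).pow_const 2).aestronglyMeasurable
        (hmeas b).aestronglyMeasurable
    rw [h2, hm2 a ha, hm1 b hb]; norm_num
  have hsqsq : ∀ a b : Fin 11, a ≠ 0 → b ≠ 0 → a ≠ b →
      ∫ ω, X a ω ^ 2 * X b ω ^ 2 ∂P = 1/9 := by
    intro a b ha hb hab
    have h2 : ∫ ω, X a ω ^ 2 * X b ω ^ 2 ∂P = (∫ ω, X a ω ^ 2 ∂P) * ∫ ω, X b ω ^ 2 ∂P :=
      (indSqSq a b hab).integral_fun_mul_eq_mul_integral ((hmeas a).pow_const 2).aestronglyMeasurable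
        ((hmeas b).pow_const 2).aestronglyMeasurable
    rw [h2, hm2 a ha, hm2 b hb]; norm_num
  -- covariance between coordinates
  have covX : ∀ m n : Fin 11, m ≠ 0 → n ≠ 0 →
      (∫ ω, X m ω * X n ω ∂P) - (∫ ω, X m ω ∂P) * (∫ ω, X n ω ∂P)
        = if m = n then 1/12 else 0 := by
    intro m n hm hn
    by_cases h : m = n
    · subst h
      rw [if_pos rfl]
      have e : ∫ ω, X m ω * X m ω ∂P = ∫ ω, X m ω ^ 2 ∂P :=
        integral_congr_ae (Filter.Eventually.of_forall fun ω => (pow_two _).symm)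
      rw [e, hm2 m hm, hm1 m hm]; norm_num
    · rw [if_neg h]
      exact covzero _ _ (ind2 m n h) (hmeas m) (hmeas n)
  -- variance computations
  have hvar_main : ∀ m : Fin 11, m ≠ 0 → var P (X m) = 1/12 := by
    intro m hm
    unfold var
    rw [hm2 m hm, hm1 m hm]; norm_num
  have hvar_int : ∀ a b : Fin 11, a ≠ 0 → b ≠ 0 → a ≠ b →
      var P (fun ω => X a ω * X b ω) = 7/144 := by
    intro a b ha hb hab
    unfold var
    have e : ∫ ω, (X a ω * X b ω) ^ 2 ∂P = ∫ ω, X a ω ^ 2 * X b ω ^ 2 ∂P :=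
      integral_congr_ae (Filter.Eventually.of_forall fun ω => by ring)
    rw [e, hsqsq a b ha hb hab, hprod a b ha hb hab]; norm_num
  -- covariance of a main effect with Y
  have hcov_main : ∀ m : Fin 11, (m = 2 ∨ m = 3 ∨ m = 4 ∨ m = 5) →
      cov P (X m) Y = 1/12 := by
    intro m hm
    have hm0 : m ≠ 0 := by rcases hm with rfl|rfl|rfl|rfl <;> decide
    have hm1' : m ≠ 1 := by rcases hm with rfl|rfl|rfl|rfl <;> decide
    rw [covsplit (X m) (hmeas m) (hnorm m hm0),
        covzero _ _ (indG _ (ind2 m 1 hm1')) (hmeas m) hGmeas,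
        covX m 2 hm0 (by decide), covX m 3 hm0 (by decide),
        covX m 4 hm0 (by decide), covX m 5 hm0 (by decide),
        covzero _ _ (ind2 m 0 hm0) (hmeas m) (hmeas 0)]
    rcases hm with rfl|rfl|rfl|rfl <;> simp (config := { decide := true }) <;> try norm_num
  -- covariance of an interaction with Y
  have hcov_int : ∀ a b : Fin 11, (a = 2 ∨ a = 3 ∨ a = 4 ∨ a = 5) →
      (b = 2 ∨ b = 3 ∨ b = 4 ∨ b = 5) → a ≠ b →
      cov P (fun ω => X a ω * X b ω) Y = 1/12 := by
    intro a b ha hb hab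
    have ha0 : a ≠ 0 := by rcases ha with rfl|rfl|rfl|rfl <;> decide
    have ha1 : a ≠ 1 := by rcases ha with rfl|rfl|rfl|rfl <;> decide
    have hb0 : b ≠ 0 := by rcases hb with rfl|rfl|rfl|rfl <;> decide
    have hb1 : b ≠ 1 := by rcases hb with rfl|rfl|rfl|rfl <;> decide
    have hZmeas : Measurable (fun ω => X a ω * X b ω) := (hmeas a).mul (hmeas b)
    have hZb : ∀ᵐ ω ∂P, ‖X a ω * X b ω‖ ≤ 1 := by
      filter_upwards [hnorm a ha0, hnorm b hb0] with ω h1 h2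
      rw [norm_mul]
      calc ‖X a ω‖ * ‖X b ω‖ ≤ 1 * 1 := mul_le_mul h1 h2 (norm_nonneg _) zero_le_one
        _ = 1 := by norm_num
    have hterm : ∀ n : Fin 11, n ≠ 0 →
        (∫ ω, (X a ω * X b ω) * X n ω ∂P)
          - (∫ ω, X a ω * X b ω ∂P) * (∫ ω, X n ω ∂P)
          = if n = a ∨ n = b then 1/24 else 0 := by
      intro n hn0
      by_cases hna : n = a
      · subst hna
        rw [if_pos (Or.inl rfl)]
        have e : ∫ ω, (X n ω * X b ω) * X n ω ∂P = ∫ ω, X n ω ^ 2 * X b ω ∂P :=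
          integral_congr_ae (Filter.Eventually.of_forall fun ω => by ring)
        rw [e, hsqprod n b hn0 hb0 hab, hprod n b hn0 hb0 hab, hm1 n hn0]
        norm_num
      · by_cases hnb : n = b
        · subst hnb
          rw [if_pos (Or.inr rfl)]
          have e : ∫ ω, (X a ω * X n ω) * X n ω ∂P = ∫ ω, X n ω ^ 2 * X a ω ∂P :=
            integral_congr_ae (Filter.Eventually.of_forall fun ω => by ring)
          have e2 : ∫ ω, X a ω * X n ω ∂P = 1/4 := hprod a n ha0 hn0 hab
          rw [e, hsqprod n a hn0 ha0 (fun h => hab h.symm), e2, hm1 n hn0]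
          norm_num
        · rw [if_neg (by tauto)]
          exact covzero _ _
            (indMul a b n (fun h => hna h.symm) (fun h => hnb h.symm)) hZmeas (hmeas n)
    rw [covsplit _ hZmeas hZb,
        covzero _ _ (indG _ (indMul a b 1 ha1 hb1)) hZmeas hGmeas,
        hterm 2 (by decide), hterm 3 (by decide), hterm 4 (by decide), hterm 5 (by decide),
        covzero _ _ (indMul a b 0 ha0 hb0) hZmeas (hmeas 0)]
    rcases ha with rfl|rfl|rfl|rfl <;> rcases hb with rfl|rfl|rfl|rfl <;>
      first
        | exact absurd rfl hab
        | (simp (config := { decide := true }); try norm_num)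
  -- final assembly
  intro i j k hi hj hk hij
  simp only [Finset.mem_insert, Finset.mem_singleton] at hi hj hk
  have hi' : ((i : Fin 11) = 2 ∨ (i : Fin 11) = 3 ∨ (i : Fin 11) = 4 ∨ (i : Fin 11) = 5) := by
    rcases hi with rfl|rfl|rfl|rfl <;> decide
  have hj' : ((j : Fin 11) = 2 ∨ (j : Fin 11) = 3 ∨ (j : Fin 11) = 4 ∨ (j : Fin 11) = 5) := by
    rcases hj with rfl|rfl|rfl|rfl <;> decide
  have hk' : ((k : Fin 11) = 2 ∨ (k : Fin 11) = 3 ∨ (k : Fin 11) = 4 ∨ (k : Fin 11) = 5) := by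
    rcases hk with rfl|rfl|rfl|rfl <;> decide
  have hij' : (i : Fin 11) ≠ (j : Fin 11) := by
    rcases hi with rfl|rfl|rfl|rfl <;> rcases hj with rfl|rfl|rfl|rfl <;>
      first
        | exact absurd rfl hij
        | decide
  have hi0 : (i : Fin 11) ≠ 0 := by rcases hi' with h|h|h|h <;> rw [h] <;> decide
  have hj0 : (j : Fin 11) ≠ 0 := by rcases hj' with h|h|h|h <;> rw [h] <;> decide
  have hk0 : (k : Fin 11) ≠ 0 := by rcases hk' with h|h|h|h <;> rw [h] <;> decide
  rw [hcov_int _ _ hi' hj' hij', hcov_main _ hk', hvar_main _ hk0,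
      hvar_int _ _ hi0 hj0 hij']
  -- numeric identity
  have h7 : Real.sqrt 7 * Real.sqrt 7 = 7 := Real.mul_self_sqrt (by norm_num)
  have h12 : Real.sqrt 12 * Real.sqrt 12 = 12 := Real.mul_self_sqrt (by norm_num)
  have h7p : (0:ℝ) < Real.sqrt 7 := Real.sqrt_pos.mpr (by norm_num)
  have h12p : (0:ℝ) < Real.sqrt 12 := Real.sqrt_pos.mpr (by norm_num)
  have e1 : Real.sqrt (7/144) = Real.sqrt 7 / 12 := by
    rw [Real.sqrt_div (by norm_num : (0:ℝ) ≤ 7) 144,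
      show (144:ℝ) = 12 ^ 2 by norm_num, Real.sqrt_sq (by norm_num : (0:ℝ) ≤ 12)]
  have e2 : Real.sqrt (12/7) = Real.sqrt 12 / Real.sqrt 7 :=
    Real.sqrt_div (by norm_num) 7
  have e3 : Real.sqrt (1/12) = 1 / Real.sqrt 12 := by
    rw [Real.sqrt_div (by norm_num : (0:ℝ) ≤ 1) 12, Real.sqrt_one]
  rw [e1, e2, e3]
  field_simp
  nlinarith [h12]
end

section
/- Along the LARS direction, the absolute current correlations of the active variables satisfy equation (2): for every i ∈ A and every γ with 0 ≤ γ ≤ 1, |⟨xᵢ, y - (μ̂ + γ(ȳ - μ̂))⟩| = (1 - γ)·|⟨xᵢ, y - μ̂⟩|. -/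
/-- Equation (2): along the LARS direction, the absolute current correlations of the
active variables satisfy, for every active variable `x i` and every `0 ≤ γ ≤ 1`,
`|⟨xᵢ, y - (μ̂ + γ(ȳ - μ̂))⟩| = (1 - γ)·|⟨xᵢ, y - μ̂⟩|`, where `ȳ` is the orthogonal
projection of `y` onto the span `K` of the active variables (characterized by
`ȳ ∈ K` and `y - ȳ ⟂ K`). -/
theorem lars_abs_correlation_eq
    {E : Type*} [NormedAddCommGroup E] [InnerProductSpace ℝ E]
    {ι : Type*} [Fintype ι] (x : ι → E) (y muhat ybar : E)
    (hybar_mem : ybar ∈ Submodule.span ℝ (Set.range x))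
    (hybar_orth : ∀ v ∈ Submodule.span ℝ (Set.range x), inner ℝ (y - ybar) v = (0 : ℝ)) :
    ∀ (i : ι) (γ : ℝ), 0 ≤ γ → γ ≤ 1 →
      |(inner ℝ (x i) (y - (muhat + γ • (ybar - muhat))) : ℝ)| =
        (1 - γ) * |(inner ℝ (x i) (y - muhat) : ℝ)| := by
  intro i γ h0 h1
  have horth : (inner ℝ (x i) (y - ybar) : ℝ) = 0 := by
    rw [real_inner_comm]
    exact hybar_orth _ (Submodule.subset_span (Set.mem_range_self i))
  have hb : (inner ℝ (x i) ybar : ℝ) = inner ℝ (x i) y := by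
    rw [inner_sub_right] at horth; linarith
  have key : (inner ℝ (x i) (y - (muhat + γ • (ybar - muhat))) : ℝ)
      = (1 - γ) * inner ℝ (x i) (y - muhat) := by
    simp only [inner_sub_right, inner_add_right, inner_smul_right, hb]
    ring
  rw [key, abs_mul, abs_of_nonneg (by linarith : (0:ℝ) ≤ 1 - γ)]
end

section
/- The LARS direction makes the same acute angle with every maximally correlated active variable: suppose each xⱼ has unit norm, Ĉ > 0, and d := ȳ - μ̂ ≠ 0; then for all j, k ∈ A with |ĉⱼ| = Ĉ and |ĉₖ| = Ĉ, one has ⟨sign(ĉⱼ)·xⱼ, d⟩ = ⟨sign(ĉₖ)·xₖ, d⟩ and ⟨sign(ĉⱼ)·xⱼ, d⟩ > 0 (so the angle between sign(ĉⱼ)xⱼ and d is the same for all such j and is less than 90°). -/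
/-- The LARS direction `d = ȳ - μ̂` makes the same acute angle with every maximally
correlated active variable: if each `xⱼ` has unit norm, `Ĉ > 0` and `d ≠ 0`, then for
all `j, k ∈ A` with `|ĉⱼ| = Ĉ` and `|ĉₖ| = Ĉ` (where `ĉⱼ = ⟨xⱼ, y - μ̂⟩`), one has
`⟨sign(ĉⱼ)·xⱼ, d⟩ = ⟨sign(ĉₖ)·xₖ, d⟩` and `⟨sign(ĉⱼ)·xⱼ, d⟩ > 0`. Here `ȳ` is the
orthogonal projection of `y` onto the span `K` of the active variables (characterized
by `ȳ ∈ K` and `y - ȳ ⟂ K`). -/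
theorem lars_direction_same_acute_angle
    {E : Type*} [NormedAddCommGroup E] [InnerProductSpace ℝ E]
    {ι : Type*} [Fintype ι] (x : ι → E) (y muhat ybar : E)
    (hybar_mem : ybar ∈ Submodule.span ℝ (Set.range x))
    (hybar_orth : ∀ v ∈ Submodule.span ℝ (Set.range x), inner ℝ (y - ybar) v = (0 : ℝ))
    (hnorm : ∀ j : ι, ‖x j‖ = 1)
    (C : ℝ) (hC : 0 < C)
    (hd : ybar - muhat ≠ 0) :
    ∀ j k : ι, |(inner ℝ (x j) (y - muhat) : ℝ)| = C →
      |(inner ℝ (x k) (y - muhat) : ℝ)| = C →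
      (inner ℝ (Real.sign (inner ℝ (x j) (y - muhat) : ℝ) • x j) (ybar - muhat) : ℝ) =
        (inner ℝ (Real.sign (inner ℝ (x k) (y - muhat) : ℝ) • x k) (ybar - muhat) : ℝ) ∧
      0 < (inner ℝ (Real.sign (inner ℝ (x j) (y - muhat) : ℝ) • x j) (ybar - muhat) : ℝ) := by
  have key : ∀ j : ι, |(inner ℝ (x j) (y - muhat) : ℝ)| = C →
      (inner ℝ (Real.sign (inner ℝ (x j) (y - muhat) : ℝ) • x j) (ybar - muhat) : ℝ) = C := by
    intro j hj
    have hx : x j ∈ Submodule.span ℝ (Set.range x) :=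
      Submodule.subset_span ⟨j, rfl⟩
    have h0 : (inner ℝ (x j) (y - ybar) : ℝ) = 0 := by
      rw [real_inner_comm]; exact hybar_orth _ hx
    have hsplit : (inner ℝ (x j) (ybar - muhat) : ℝ) = inner ℝ (x j) (y - muhat) := by
      have : (ybar - muhat) = (y - muhat) - (y - ybar) := by abel
      rw [this, inner_sub_right, h0, sub_zero]
    set c : ℝ := inner ℝ (x j) (y - muhat) with hc
    have hcne : c ≠ 0 := by
      intro h; rw [h, abs_zero] at hj; exact hC.ne hj
    rw [real_inner_smul_left, hsplit]
    rcases hcne.lt_or_gt with h | h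
    · rw [Real.sign_of_neg h, ← hj, abs_of_neg h]; ring
    · rw [Real.sign_of_pos h, ← hj, abs_of_pos h]; ring
  intro j k hj hk
  rw [key j hj, key k hk]
  exact ⟨rfl, hC⟩
end
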